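/- Let S¹ = {z ∈ ℂ : |z| = 1} denote the unit circle and regard the torus as T = S¹ × S¹. There is no homeomorphism h : T → T satisfying h ∘ σ_rot = σ_anti ∘ h, where σ_rot(z, w) = (-z, w) and σ_anti(z, w) = (-z, w̄); that is, the two free involutions σ_rot and σ_anti on the torus are not equivariantly isomorphic. -/

import Mathlib

/-- The unit circle in `ℂ`. -/
abbrev UnitCircle := Metric.sphere (0 : ℂ) 1

/-- The torus `S¹ × S¹`. -/
abbrev Torus := UnitCircle × UnitCircle

/-- The rotation involution `σ_rot (z, w) = (-z, w)` on the torus. -/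
noncomputable def sigmaRot (p : Torus) : Torus := (-p.1, p.2)

/-- Complex conjugation on the unit circle. -/
noncomputable def circleConj (z : UnitCircle) : UnitCircle :=
  ⟨(starRingEnd ℂ) (z : ℂ), by
    have h2 := z.2
    simp only [Metric.mem_sphere, dist_eq_norm, sub_zero] at h2 ⊢
    simpa using h2⟩

/-- The antipodal-type involution `σ_anti (z, w) = (-z, conj w)` on the torus. -/
noncomputable def sigmaAnti (p : Torus) : Torus := (-p.1, circleConj p.2)

/-!
An equivariant homeomorphism `h` would turn the half-turn rotation `z ↦ e^{iπs} z` of the first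
factor, `s ∈ [0, 1]`, into a free homotopy of loops in `S¹`: the second coordinate of `h` along
the loop `h⁻¹ (1, e^{2πit})` is moved from `e^{2πit}` to its conjugate `e^{-2πit}`, since at
`s = 1` the rotation is `σ_rot`. Lifting the homotopy through `exp : ℂ → ℂ \ {0}` (possible as
`ℝ²` is simply connected) shows that the winding number is a free-homotopy invariant, but these
two loops wind `1` and `-1` times.
-/

open Complex Real

theorem Complex.exists_continuous_exp_lift {A : Type*} [TopologicalSpace A]
    [SimplyConnectedSpace A] [LocallyPathConnectedSpace A] {G : A → ℂ} (hG : Continuous G)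
    (hG0 : ∀ a, G a ≠ 0) : ∃ L : A → ℂ, Continuous L ∧ ∀ a, exp (L a) = G a := by
  obtain ⟨a₀⟩ := (inferInstance : Nonempty A)
  obtain ⟨L, ⟨-, hL⟩, -⟩ := isCoveringMapOn_exp.existsUnique_continuousMap_lifts ⟨G, hG⟩
    (exp_log (hG0 a₀)) hG0
  exact ⟨L, L.continuous, congr_fun hL⟩

theorem Complex.sub_eq_sub_of_exp_eq {X : Type*} [TopologicalSpace X] [PreconnectedSpace X]
    {f g : X → ℂ} (hf : Continuous f) (hg : Continuous g) (hfg : ∀ x, exp (f x) = exp (g x))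
    (x y : X) : f x - g x = f y - g y :=
  isCoveringMap_exp.const_of_comp (hf.sub hg) (fun a b => Subtype.ext <| by simp [exp_sub, hfg])
    x y

theorem Complex.eq_of_homotopic_exp_loops {G : ℝ × ℝ → ℂ} (hG : Continuous G)
    (hG0 : ∀ p, G p ≠ 0) (hper : ∀ s, G (s, 0) = G (s, 1)) {m n : ℤ}
    (h0 : ∀ t, G (0, t) = exp (2 * π * m * t * I)) (h1 : ∀ t, G (1, t) = exp (2 * π * n * t * I)) :
    m = n := by
  obtain ⟨L, hL, hLG⟩ := exists_continuous_exp_lift hG hG0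
  have hwind := sub_eq_sub_of_exp_eq (f := fun s => L (s, 1)) (g := fun s => L (s, 0))
    (by fun_prop) (by fun_prop) (fun s => by simp only [hLG, hper]) 0 1
  have hm := sub_eq_sub_of_exp_eq (f := fun t => L (0, t)) (g := fun t => 2 * π * m * t * I)
    (by fun_prop) (by fun_prop) (fun t => by simp only [hLG, h0]) 1 0
  have hn := sub_eq_sub_of_exp_eq (f := fun t => L (1, t)) (g := fun t => 2 * π * n * t * I)
    (by fun_prop) (by fun_prop) (fun t => by simp only [hLG, h1]) 1 0
  have hmn : (2 * π * I : ℂ) * m = 2 * π * I * n := by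
    simp only [ofReal_zero, ofReal_one, mul_zero, zero_mul, mul_one, sub_zero] at hwind hm hn
    linear_combination hwind - hm + hn
  exact_mod_cast mul_left_cancel₀ two_pi_I_ne_zero hmn

noncomputable def expCircle (θ : ℝ) : UnitCircle := ⟨exp (θ * I), by simp [norm_exp_ofReal_mul_I]⟩

@[simp]
theorem coe_expCircle (θ : ℝ) : (expCircle θ : ℂ) = exp (θ * I) := rfl

@[fun_prop]
theorem continuous_expCircle : Continuous expCircle := by
  unfold expCircle; fun_prop

theorem expCircle_zero : expCircle 0 = 1 := Subtype.ext <| by simp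

theorem expCircle_pi : expCircle π = -1 := Subtype.ext <| by simp [exp_pi_mul_I]

theorem expCircle_two_pi : expCircle (2 * π) = 1 := Subtype.ext <| by simp [exp_two_pi_mul_I]

theorem circleConj_expCircle (θ : ℝ) : circleConj (expCircle θ) = expCircle (-θ) :=
  Subtype.ext <| by simp [circleConj, ← exp_conj]

/-- There is no homeomorphism `h` of the torus `T = S¹ × S¹` with
`h ∘ σ_rot = σ_anti ∘ h`: the two free involutions `σ_rot (z, w) = (-z, w)` and
`σ_anti (z, w) = (-z, conj w)` are not equivariantly isomorphic. -/
theorem rot_not_equivariantly_isomorphic_anti :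
    ¬ ∃ h : Torus ≃ₜ Torus, ∀ p : Torus, h (sigmaRot p) = sigmaAnti (h p) := by
  rintro ⟨h, hcomm⟩
  let q : ℝ → Torus := fun t => h.symm (1, expCircle (2 * π * t))
  let G : ℝ × ℝ → ℂ := fun st => (h (expCircle (π * st.1) * (q st.2).1, (q st.2).2)).2
  have hG : Continuous G := by fun_prop
  have hG0 : ∀ st, G st ≠ 0 := fun st => ne_zero_of_mem_unit_sphere _
  have hper : ∀ s, G (s, 0) = G (s, 1) := by simp [G, q, expCircle_zero, expCircle_two_pi]
  have h0 : ∀ t, G (0, t) = exp (2 * π * (1 : ℤ) * t * I) := by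
    intro t; simp [G, q, expCircle_zero]
  have h1 : ∀ t, G (1, t) = exp (2 * π * (-1 : ℤ) * t * I) := by
    intro t
    have hrot : (expCircle π * (q t).1, (q t).2) = sigmaRot (q t) := by
      simp [sigmaRot, expCircle_pi, neg_one_mul]
    simp [G, hrot, hcomm, q, sigmaAnti, circleConj_expCircle]
  exact absurd (eq_of_homotopic_exp_loops hG hG0 hper h0 h1) (by decide)
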